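/- arXiv:1701.08018 — 6 statements merged into one kernel-verified Lean document; each statement's English description precedes it below -/
import Mathlib

section
/- Let G be a finite group and N a normal subgroup of G with |G : N| = p for some prime p. Then M'_{G,N} = − Σ_{C ≤ N, C cyclic} φ(|C|) − Σ_{Y < G, Y ≰ N} M'_{Y, Y ∩ N}, where the first sum is over all cyclic subgroups C of N, and the second sum is over all proper subgroups Y of G not contained in N, with M'_{Y, Y ∩ N} = Σ_{X ≤ Y ∩ N} |X|·μ(X,Y). -/
/-!
Exchanging the order of summation, `Σ_Y M'_{Y, Y ∩ N} = Σ_{X ≤ N} |X| Σ_{Y ≥ X} μ(X, Y)`,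
and every inner Möbius sum vanishes because no `X ≤ N` equals `G`. Split the outer sum
into the terms with `Y ≤ N`, the proper `Y ≰ N`, and `Y = G` (which contributes `M'_{G,N}`).
By Möbius inversion the first part is `Σ_{Y ≤ N} Σ_{X ≤ Y} |X| μ(X, Y) = |N|`, and counting
the elements of `N` according to the cyclic subgroup they generate gives
`|N| = Σ_{C ≤ N cyclic} φ(|C|)`.
-/

noncomputable instance subgroupFintype (G : Type*) [Group G] [Finite G] :
    Fintype (Subgroup G) :=
  Fintype.ofFinite _

open Classical in
/-- The Möbius function of the lattice of subgroups of `G`, ordered by inclusion. -/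
noncomputable def subgroupMu (G : Type*) [Group G] [Finite G] (X Y : Subgroup G) : ℤ :=
  letI : LocallyFiniteOrder (Subgroup G) := Fintype.toLocallyFiniteOrder
  IncidenceAlgebra.mu ℤ X Y

open Classical in
/-- `Mprime G Y M = Σ_{X ≤ M} |X| · μ(X, Y)`.  In particular `Mprime G ⊤ N` is the
quantity `M'_{G,N} = Σ_{X ≤ N} |X| · μ(X, G)` of the paper. -/
noncomputable def Mprime (G : Type*) [Group G] [Finite G] (Y M : Subgroup G) : ℤ :=
  ∑ X : Subgroup G, if X ≤ M then (Nat.card X : ℤ) * subgroupMu G X Y else 0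

section MobiusSums

open Classical

variable {G : Type*} [Group G] [Finite G]

lemma sum_subgroupMu_Icc (X M : Subgroup G) :
    ∑ Y : Subgroup G, (if X ≤ Y ∧ Y ≤ M then subgroupMu G X Y else 0) =
      if X = M then 1 else 0 := by
  let _ : LocallyFiniteOrder (Subgroup G) := Fintype.toLocallyFiniteOrder
  unfold subgroupMu
  rw [← Finset.sum_filter]
  convert IncidenceAlgebra.sum_Icc_mu_right (𝕜 := ℤ) X M using 2
  ext Y
  simp

lemma sum_Mprime_inf_eq_zero {N : Subgroup G} (hN : N ≠ ⊤) :
    ∑ Y : Subgroup G, Mprime G Y (Y ⊓ N) = 0 := by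
  unfold Mprime
  rw [Finset.sum_comm]
  refine Finset.sum_eq_zero fun X _ => ?_
  by_cases hXN : X ≤ N
  · have hX : X ≠ ⊤ := fun h => hN (top_le_iff.mp (h ▸ hXN))
    calc ∑ Y : Subgroup G, (if X ≤ Y ⊓ N then (Nat.card X : ℤ) * subgroupMu G X Y else 0)
        = Nat.card X * ∑ Y : Subgroup G,
            (if X ≤ Y ∧ Y ≤ ⊤ then subgroupMu G X Y else 0) := by
          rw [Finset.mul_sum]
          congr with Y
          simp [hXN, mul_ite]
      _ = 0 := by rw [sum_subgroupMu_Icc, if_neg hX, mul_zero]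
  · exact Finset.sum_eq_zero fun Y _ => if_neg fun h => hXN (h.trans inf_le_right)

lemma sum_Mprime_self_of_le (N : Subgroup G) :
    ∑ Y : Subgroup G, (if Y ≤ N then Mprime G Y Y else 0) = Nat.card N := by
  unfold Mprime
  calc ∑ Y : Subgroup G, (if Y ≤ N then ∑ X : Subgroup G,
          (if X ≤ Y then (Nat.card X : ℤ) * subgroupMu G X Y else 0) else 0)
      = ∑ X : Subgroup G, Nat.card X * ∑ Y : Subgroup G,
          (if X ≤ Y ∧ Y ≤ N then subgroupMu G X Y else 0) := by
        simp_rw [Finset.mul_sum]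
        rw [Finset.sum_comm]
        congr with Y
        by_cases hY : Y ≤ N <;> simp [hY, mul_ite]
    _ = Nat.card N := by simp [sum_subgroupMu_Icc]

lemma sum_Mprime_inf_split {N : Subgroup G} (hN : N ≠ ⊤) :
    ∑ Y : Subgroup G, Mprime G Y (Y ⊓ N) =
      ∑ Y : Subgroup G, (if Y ≤ N then Mprime G Y Y else 0) +
        ∑ Y : Subgroup G, (if Y < ⊤ ∧ ¬ Y ≤ N then Mprime G Y (Y ⊓ N) else 0) +
          Mprime G ⊤ N := by
  have hsplit (Y : Subgroup G) : Mprime G Y (Y ⊓ N) =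
      (if Y ≤ N then Mprime G Y Y else 0) +
        (if Y < ⊤ ∧ ¬ Y ≤ N then Mprime G Y (Y ⊓ N) else 0) +
          (if Y = ⊤ then Mprime G ⊤ N else 0) := by
    by_cases hYN : Y ≤ N
    · have hY : Y ≠ ⊤ := fun h => hN (top_le_iff.mp (h ▸ hYN))
      simp [hYN, hY]
    · by_cases hY : Y = ⊤
      · subst hY
        simp [hYN]
      · simp [hYN, hY, lt_top_iff_ne_top]
  simp only [Finset.sum_congr rfl fun Y _ => hsplit Y, Finset.sum_add_distrib,
    Finset.sum_ite_eq', Finset.mem_univ, if_true]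

end MobiusSums

section CyclicSubgroups

open Classical
open scoped Finset

lemma zpowers_eq_iff {G : Type*} [Group G] [Finite G] {g : G} {C : Subgroup G} :
    Subgroup.zpowers g = C ↔ g ∈ C ∧ orderOf g = Nat.card C := by
  constructor
  · rintro rfl
    exact ⟨Subgroup.mem_zpowers g, (Nat.card_zpowers g).symm⟩
  · rintro ⟨hg, hord⟩
    exact Subgroup.eq_of_le_of_card_ge (Subgroup.zpowers_le.mpr hg)
      (by rw [Nat.card_zpowers, hord])

lemma card_filter_zpowers_eq {G : Type*} [Group G] [Fintype G] (C : Subgroup G) [IsCyclic C] :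
    #{g : G | Subgroup.zpowers g = C} = Nat.totient (Nat.card C) := by
  have : Fintype C := Fintype.ofFinite C
  have hgen : ({g : G | Subgroup.zpowers g = C} : Finset G) =
      ({a : C | orderOf a = Nat.card C} : Finset C).map (Function.Embedding.subtype _) := by
    ext g
    simp [zpowers_eq_iff, and_comm]
  rw [hgen, Finset.card_map, Nat.card_eq_fintype_card,
    IsCyclic.card_orderOf_eq_totient dvd_rfl]

lemma sum_totient_card_cyclic_of_le {G : Type*} [Group G] [Finite G] (N : Subgroup G) :
    ∑ C : Subgroup G, (if C ≤ N ∧ IsCyclic C then (Nat.totient (Nat.card C) : ℤ) else 0) =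
      Nat.card N := by
  have := Fintype.ofFinite G
  have hfib := Finset.card_eq_sum_card_fiberwise (s := (N : Set G).toFinset)
    (t := {C : Subgroup G | C ≤ N ∧ IsCyclic C}) (f := Subgroup.zpowers) fun g hg => by
      simp only [Set.mem_toFinset, SetLike.mem_coe, Finset.coe_filter, Finset.mem_univ,
        true_and, Set.mem_ofPred_eq] at hg ⊢
      exact ⟨Subgroup.zpowers_le.mpr hg, inferInstance⟩
  rw [← Finset.sum_filter, ← SetLike.coe_sort_coe, Nat.card_coe_set_eq,
    Set.ncard_eq_toFinset_card', ← Nat.cast_sum, Nat.cast_inj, hfib]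
  refine Finset.sum_congr rfl fun C hC => ?_
  obtain ⟨hCN, hcyc⟩ := (Finset.mem_filter.mp hC).2
  rw [← card_filter_zpowers_eq C]
  congr 1
  ext g
  simp only [Finset.mem_filter, Finset.mem_univ, true_and, Set.mem_toFinset, SetLike.mem_coe,
    iff_and_self]
  rintro rfl
  exact hCN (Subgroup.mem_zpowers g)

end CyclicSubgroups

open Classical in
theorem stmt5_general (G : Type*) [Group G] [Finite G] (N : Subgroup G)
    (p : ℕ) (hp : p.Prime) (hidx : N.index = p) :
    Mprime G ⊤ N =
      - (∑ C : Subgroup G, if C ≤ N ∧ IsCyclic ↥C then (Nat.totient (Nat.card C) : ℤ) else 0)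
      - ∑ Y : Subgroup G, if Y < ⊤ ∧ ¬ Y ≤ N then Mprime G Y (Y ⊓ N) else 0 := by
  have hN : N ≠ ⊤ := fun h => hp.ne_one (by rw [← hidx, h, Subgroup.index_top])
  have hzero := sum_Mprime_inf_eq_zero hN
  rw [sum_Mprime_inf_split hN, sum_Mprime_self_of_le] at hzero
  linarith [sum_totient_card_cyclic_of_le N]

open Classical in
/-- If `N ⊴ G` has prime index `p`, then
`M'_{G,N} = − Σ_{C ≤ N, C cyclic} φ(|C|) − Σ_{Y < G, Y ≰ N} M'_{Y, Y ∩ N}`. -/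
theorem stmt5 (G : Type*) [Group G] [Finite G] (N : Subgroup G) (hN : N.Normal)
    (p : ℕ) (hp : p.Prime) (hidx : N.index = p) :
    Mprime G ⊤ N =
      - (∑ C : Subgroup G, if C ≤ N ∧ IsCyclic ↥C then (Nat.totient (Nat.card C) : ℤ) else 0)
      - ∑ Y : Subgroup G, if Y < ⊤ ∧ ¬ Y ≤ N then Mprime G Y (Y ⊓ N) else 0 :=
  stmt5_general G N p hp hidx
end

section
/- Let G be a finite group and N a normal subgroup of G with |G : N| = p for some prime p. Then M'_{G,N} = − Σ_{C ≤ N, C cyclic} (1 − χ(T_C(G)))·φ(|C|), where the sum is over all cyclic subgroups C of N. -/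
/-- The poset `T_C(G)` of all subgroups `X` of `G` with `C ≤ X`, `X` a proper subgroup
of `G`, and `X` not contained in `N`, ordered by inclusion. -/
def TCposet (G : Type*) [Group G] (N C : Subgroup G) : Set (Subgroup G) :=
  {X | C ≤ X ∧ X < ⊤ ∧ ¬ X ≤ N}

/-- `chainCount G N C i` is the number `c_i` of strictly increasing chains
`X_0 < X_1 < ⋯ < X_i` of elements of `T_C(G)`. -/
noncomputable def chainCount (G : Type*) [Group G] [Finite G] (N C : Subgroup G) (i : ℕ) : ℕ :=
  Nat.card {s : LTSeries (TCposet G N C) // s.length = i}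

/-- The Euler characteristic `χ(T_C(G)) = Σ_{i ≥ 0} (-1)^i c_i` of (the geometric
realization of the nerve of) the poset `T_C(G)`. -/
noncomputable def eulerCharTC (G : Type*) [Group G] [Finite G] (N C : Subgroup G) : ℤ :=
  ∑ᶠ i : ℕ, (-1 : ℤ) ^ i * chainCount G N C i

/-!
Counting the elements of `X` by the cyclic subgroup they generate gives
`|X| = Σ_{C ≤ X cyclic} φ(|C|)`, hence
`M'_{G,N} = Σ_{C ≤ N cyclic} φ(|C|) Σ_{C ≤ X ≤ N} μ(X, G)`.
As `N ≠ G`, the interval `[C, G]` is the disjoint union of `[C, N]`, `{G}` and `T_C(G)`, so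
`Σ_{C ≤ X ≤ G} μ(X, G) = 0` turns the inner sum into `-1 - Σ_{X ∈ T_C(G)} μ(X, G)`.
Finally, `T_C(G)` is an upper set of `{X | X < G}`, and for such a set `T` Hall's theorem gives
`Σ_{x ∈ T} μ(x, G) = -χ(T)`: the signed number of chains of `T` starting at `x` satisfies
the same recursion over `{y ∈ T | x < y}` as `-μ(x, G)`.
-/

open Finset

section Chains
variable {β : Type*} [Preorder β]

def LTSeries.headEquiv (x : β) :
    {s : LTSeries β // s.head = x} ≃ Option {s : LTSeries β // x < s.head} where
  toFun s := if h : s.1.length = 0 then none else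
    some ⟨s.1.tail h, by
      obtain ⟨s, rfl⟩ := s
      exact s.step ⟨0, Nat.pos_of_ne_zero h⟩⟩
  invFun t := t.elim ⟨RelSeries.singleton _ x, rfl⟩ fun t => ⟨t.1.cons x t.2, rfl⟩
  left_inv := by
    rintro ⟨⟨_ | l, f, hf⟩, rfl⟩
    · ext i
      · rfl
      · rw [Fin.fin_one_eq_zero i]; rfl
    · exact Subtype.ext (RelSeries.cons_self_tail l.succ_ne_zero)
  right_inv := by
    rintro (_ | ⟨t, ht⟩)
    · rfl
    · simp [RelSeries.tail_cons]

/-- The Euler characteristic of the order complex of `β`, whose `i`-simplices are the chains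
`x₀ < ⋯ < xᵢ`. -/
noncomputable def chainEulerChar (β : Type*) [Preorder β] : ℤ :=
  ∑ᶠ i : ℕ, (-1 : ℤ) ^ i * Nat.card {s : LTSeries β // s.length = i}

variable [Fintype β] [DecidableLT β]

theorem chainEulerChar_eq_sum : chainEulerChar β = ∑ s : LTSeries β, (-1 : ℤ) ^ s.length := by
  have hsupp : (Function.support fun i : ℕ =>
      (-1 : ℤ) ^ i * Nat.card {s : LTSeries β // s.length = i}) ⊆ range (Fintype.card β) := by
    refine Function.support_subset_iff'.2 fun i hi => ?_
    have : IsEmpty {s : LTSeries β // s.length = i} :=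
      ⟨fun s => hi (mem_range.2 (s.2 ▸ LTSeries.length_lt_card s.1))⟩
    simp
  rw [chainEulerChar, finsum_eq_sum_of_support_subset _ hsupp,
    ← sum_fiberwise_of_maps_to (g := RelSeries.length) fun s _ =>
      mem_range.2 (LTSeries.length_lt_card s)]
  refine sum_congr rfl fun i _ => ?_
  rw [sum_congr rfl fun s hs => by rw [(mem_filter.1 hs).2], sum_const, nsmul_eq_mul,
    Nat.card_eq_fintype_card, Fintype.card_subtype, mul_comm]

variable [DecidableEq β]

noncomputable def signedChainCount (x : β) : ℤ :=
  ∑ s : LTSeries β with s.head = x, (-1 : ℤ) ^ s.length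

theorem sum_signedChainCount : ∑ x : β, signedChainCount x = chainEulerChar β := by
  rw [chainEulerChar_eq_sum, ← sum_fiberwise _ RelSeries.head]
  rfl

theorem signedChainCount_eq (x : β) :
    signedChainCount x = 1 - ∑ y with x < y, signedChainCount y := by
  have hcons :
      signedChainCount x = 1 - ∑ s : LTSeries β with x < s.head, (-1 : ℤ) ^ s.length := by
    rw [signedChainCount,
      sum_subtype (p := fun s : LTSeries β => s.head = x) _ (fun _ => mem_filter_univ _),
      sum_subtype (p := fun s : LTSeries β => x < s.head) (F := inferInstance) _
        (fun _ => mem_filter_univ _),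
      ← (LTSeries.headEquiv x).symm.sum_comp, Fintype.sum_option]
    simp [LTSeries.headEquiv, pow_succ, sub_eq_add_neg]
  rw [hcons, ← sum_fiberwise_of_maps_to (g := RelSeries.head) (t := {y | x < y})
    fun s hs => by simpa using hs]
  congr 1
  refine sum_congr rfl fun y hy => ?_
  rw [signedChainCount]
  congr 1
  ext s
  simp only [mem_filter, mem_univ, true_and, and_iff_right_iff_imp]
  rintro rfl
  simpa using hy

end Chains

section Mobius
open IncidenceAlgebra Set
variable {α : Type*} [PartialOrder α] [LocallyFiniteOrder α] [DecidableEq α]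

open Classical in
theorem signedChainCount_eq_neg_mu {U : Set α} (hU : IsUpperSet U) (b : α)
    [Fintype ↥(U ∩ Iio b)] (x : ↥(U ∩ Iio b)) :
    signedChainCount x = -mu ℤ (x : α) b := by
  induction x using WellFoundedGT.induction with
  | _ x ih =>
  have hIoo : ∑ y : ↥(U ∩ Iio b) with x < y, mu ℤ (y : α) b
      = ∑ y ∈ Finset.Ioo (x : α) b, mu ℤ y b := by
    refine (sum_map _ (Function.Embedding.subtype _) (fun y => mu ℤ y b)).symm.trans ?_
    congr 1
    ext y
    simp only [Finset.mem_map, Finset.mem_filter_univ, Function.Embedding.coe_subtype,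
      Finset.mem_Ioo]
    constructor
    · rintro ⟨y, hxy, rfl⟩
      exact ⟨hxy, y.2.2⟩
    · rintro ⟨hxy, hyb⟩
      exact ⟨⟨y, hU hxy.le x.2.1, hyb⟩, hxy, rfl⟩
  rw [signedChainCount_eq, sum_congr rfl fun y hy => ih y (mem_filter.1 hy).2,
    sum_neg_distrib, hIoo, mu_eq_neg_sum_Ioc_of_ne x.2.2.ne, ← Finset.Ioo_insert_right x.2.2,
    sum_insert Finset.right_notMem_Ioo, mu_self]
  ring

theorem sum_mu_eq_neg_chainEulerChar {U : Set α} (hU : IsUpperSet U) (b : α)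
    [Fintype ↥(U ∩ Iio b)] :
    ∑ x : ↥(U ∩ Iio b), mu ℤ (x : α) b = -chainEulerChar ↥(U ∩ Iio b) := by
  classical
  rw [← sum_signedChainCount, ← sum_neg_distrib]
  exact sum_congr rfl fun x _ => (neg_eq_iff_eq_neg.2 (signedChainCount_eq_neg_mu hU b x)).symm

theorem sum_Icc_mu_eq_chainEulerChar_sub_one {c n b : α} (hcn : c ≤ n) (hnb : n < b) :
    ∑ x ∈ Finset.Icc c n, mu ℤ x b
      = chainEulerChar ↥({x | c ≤ x ∧ ¬x ≤ n} ∩ Iio b) - 1 := by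
  classical
  have hU : IsUpperSet {x | c ≤ x ∧ ¬x ≤ n} :=
    fun x y hxy hx => ⟨hx.1.trans hxy, fun hy => hx.2 (hxy.trans hy)⟩
  have : Fintype ↥({x | c ≤ x ∧ ¬x ≤ n} ∩ Iio b) :=
    ((Set.finite_Icc c b).subset fun x hx => ⟨hx.1.1, hx.2.le⟩).fintype
  have hbelow : (Finset.Ico c b).filter (· ≤ n) = Finset.Icc c n := by
    ext x
    simp only [Finset.mem_filter, Finset.mem_Ico, Finset.mem_Icc]
    exact ⟨fun h => ⟨h.1.1, h.2⟩, fun h => ⟨⟨h.1, h.2.trans_lt hnb⟩, h.2⟩⟩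
  have habove : ∑ x ∈ (Finset.Ico c b).filter (¬· ≤ n), mu ℤ x b
      = ∑ x : ↥({x | c ≤ x ∧ ¬x ≤ n} ∩ Iio b), mu ℤ (x : α) b :=
    sum_subtype _ (fun x => by
      simp only [Finset.mem_filter, Finset.mem_Ico, Set.mem_inter_iff, Set.mem_ofPred_eq,
        Set.mem_Iio]
      tauto) _
  have hzero := sum_Icc_mu_left (𝕜 := ℤ) c b
  rw [if_neg (hcn.trans_lt hnb).ne, ← Finset.Ico_insert_right (hcn.trans hnb.le),
    sum_insert Finset.right_notMem_Ico, mu_self, ← sum_filter_add_sum_filter_not _ (· ≤ n),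
    hbelow, habove, sum_mu_eq_neg_chainEulerChar hU] at hzero
  linarith

end Mobius

section Subgroups
variable {G : Type*} [Group G]

theorem Subgroup.zpowers_eq_iff_mem_orderOf_eq {g : G} {C : Subgroup G} [Finite C] :
    zpowers g = C ↔ g ∈ C ∧ orderOf g = Nat.card C := by
  refine ⟨fun h => ⟨h ▸ mem_zpowers g, by rw [← h, Nat.card_zpowers]⟩, fun ⟨hg, hord⟩ => ?_⟩
  exact eq_of_le_of_card_ge (zpowers_le.2 hg) ((Nat.card_zpowers g).trans hord).ge

theorem card_generators_eq_totient (C : Subgroup G) [Finite C] [IsCyclic C] :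
    Nat.card {g : G // Subgroup.zpowers g = C} = (Nat.card C).totient := by
  classical
  have := Fintype.ofFinite C
  calc Nat.card {g : G // Subgroup.zpowers g = C}
      = Nat.card {c : C // orderOf c = Nat.card C} :=
        Nat.card_congr <|
          (Equiv.subtypeEquivRight fun g => Subgroup.zpowers_eq_iff_mem_orderOf_eq).trans <|
          (Equiv.subtypeSubtypeEquivSubtypeInter (· ∈ C) _).symm.trans <|
            Equiv.subtypeEquivRight fun c => by rw [Subgroup.orderOf_coe]
    _ = (Nat.card C).totient := by
        rw [Nat.card_eq_fintype_card, Fintype.card_subtype, Nat.card_eq_fintype_card]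
        exact IsCyclic.card_orderOf_eq_totient dvd_rfl

variable [Finite G]

open Classical in
theorem card_eq_sum_totient (X : Subgroup G) :
    Nat.card X = ∑ C with C ≤ X ∧ IsCyclic C, (Nat.card C).totient := by
  classical
  have := Fintype.ofFinite G
  rw [← SetLike.coe_sort_coe, Nat.card_eq_card_toFinset, card_eq_sum_card_fiberwise
    (f := Subgroup.zpowers) (t := univ.filter fun C : Subgroup G => C ≤ X ∧ IsCyclic C)
    fun g hg => (mem_filter_univ _).2
      ⟨Subgroup.zpowers_le.2 (by simpa using hg), inferInstance⟩]
  refine sum_congr rfl fun C hC => ?_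
  obtain ⟨hCX, hC⟩ := (mem_filter_univ C).1 hC
  have hfiber : (X : Set G).toFinset.filter (Subgroup.zpowers · = C)
      = univ.filter (Subgroup.zpowers · = C) := by
    ext g
    simp only [mem_filter, Set.mem_toFinset, SetLike.mem_coe, mem_univ, true_and,
      and_iff_right_iff_imp]
    rintro rfl
    exact hCX (Subgroup.mem_zpowers g)
  rw [hfiber, ← card_generators_eq_totient C, Nat.card_eq_fintype_card, Fintype.card_subtype]

open Classical in
theorem sum_card_mul_eq_sum_totient_mul (N : Subgroup G) (f : Subgroup G → ℤ) :
    ∑ X with X ≤ N, (Nat.card X : ℤ) * f X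
      = ∑ C with C ≤ N ∧ IsCyclic C,
          ((Nat.card C).totient : ℤ) * ∑ X with C ≤ X ∧ X ≤ N, f X := by
  calc ∑ X with X ≤ N, (Nat.card X : ℤ) * f X
      = ∑ X with X ≤ N, ∑ C with C ≤ X ∧ IsCyclic C, ((Nat.card C).totient : ℤ) * f X :=
        sum_congr rfl fun X _ => by rw [card_eq_sum_totient X, Nat.cast_sum, sum_mul]
    _ = ∑ C with C ≤ N ∧ IsCyclic C,
          ∑ X with C ≤ X ∧ X ≤ N, ((Nat.card C).totient : ℤ) * f X := by
        refine sum_comm' fun X C => ?_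
        simp only [mem_filter_univ]
        exact ⟨fun ⟨hXN, hCX, hC⟩ => ⟨⟨hCX, hXN⟩, hCX.trans hXN, hC⟩,
          fun ⟨⟨hCX, hXN⟩, _, hC⟩ => ⟨hXN, hCX, hC⟩⟩
    _ = _ := sum_congr rfl fun C _ => (mul_sum _ _ _).symm

theorem eulerCharTC_eq_chainEulerChar (N C : Subgroup G) :
    eulerCharTC G N C = chainEulerChar ↥({X | C ≤ X ∧ ¬X ≤ N} ∩ Set.Iio ⊤) := by
  have hT : TCposet G N C = {X | C ≤ X ∧ ¬X ≤ N} ∩ Set.Iio ⊤ := by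
    ext X
    simp only [TCposet, Set.mem_ofPred_eq, Set.mem_inter_iff, Set.mem_Iio]
    tauto
  change chainEulerChar ↥(TCposet G N C) = _
  rw [hT]

open Classical in
theorem sum_subgroupMu_top_eq_eulerCharTC_sub_one {C N : Subgroup G} (hCN : C ≤ N)
    (hN : N ≠ ⊤) :
    ∑ X with C ≤ X ∧ X ≤ N, subgroupMu G X ⊤ = eulerCharTC G N C - 1 := by
  let : LocallyFiniteOrder (Subgroup G) := Fintype.toLocallyFiniteOrder
  have hIcc : univ.filter (fun X => C ≤ X ∧ X ≤ N) = Finset.Icc C N := by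
    ext X
    simp
  rw [hIcc, eulerCharTC_eq_chainEulerChar]
  exact sum_Icc_mu_eq_chainEulerChar_sub_one hCN hN.lt_top

end Subgroups

open Classical in
theorem stmt9_general (G : Type*) [Group G] [Finite G] (N : Subgroup G)
    (p : ℕ) (hp : p.Prime) (hidx : N.index = p) :
    Mprime G ⊤ N =
      - ∑ C : Subgroup G, if C ≤ N ∧ IsCyclic ↥C then
          (1 - eulerCharTC G N C) * (Nat.totient (Nat.card C) : ℤ)
        else 0 := by
  have hN : N ≠ ⊤ := by
    rintro rfl
    exact hp.ne_one (by rw [← hidx, Subgroup.index_top])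
  rw [Mprime, ← sum_filter, sum_card_mul_eq_sum_totient_mul, ← sum_filter, ← sum_neg_distrib]
  refine sum_congr rfl fun C hC => ?_
  rw [sum_subgroupMu_top_eq_eulerCharTC_sub_one ((mem_filter_univ C).1 hC).1 hN]
  ring

open Classical in
/-- If `N ⊴ G` has prime index `p`, then
`M'_{G,N} = − Σ_{C ≤ N, C cyclic} (1 − χ(T_C(G)))·φ(|C|)`. -/
theorem stmt9 (G : Type*) [Group G] [Finite G] (N : Subgroup G) (hN : N.Normal)
    (p : ℕ) (hp : p.Prime) (hidx : N.index = p) :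
    Mprime G ⊤ N =
      - ∑ C : Subgroup G, if C ≤ N ∧ IsCyclic ↥C then
          (1 - eulerCharTC G N C) * (Nat.totient (Nat.card C) : ℤ)
        else 0 :=
  stmt9_general G N p hp hidx
end

section
/- Let G be a finite group which is not cyclic and let N be a normal subgroup of G with |G : N| = p for some prime p. If χ(T_C(G)) = 1 for every cyclic subgroup C of N (as holds, in particular, when each geometric realization |N(T_C(G))| is contractible), then m_{G,N} = 0. -/
open Classical in
/-- Bouc's rational number `m_{G,N} = (1/|G|) · Σ_{X ≤ G, XN = G} |X| · μ(X, G)`. -/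
noncomputable def mBouc (G : Type*) [Group G] [Finite G] (N : Subgroup G) : ℚ :=
  (1 / (Nat.card G : ℚ)) *
    ∑ X : Subgroup G, if X ⊔ N = ⊤ then (Nat.card X : ℚ) * ((subgroupMu G X ⊤ : ℤ) : ℚ) else 0

/-!
Counting each `X` once for every element, `|G| · m_{G,N} = Σ_g Σ_{g ∈ X, X ≰ N} μ(X, G)`,
because for `N` of prime index `XN = G` holds exactly when `X ≰ N`. If `g ∉ N`, the inner sum
runs over the whole interval `[⟨g⟩, G]` and vanishes since `⟨g⟩ ≠ G`. If `g ∈ N`, it runs over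
`G` and `T_⟨g⟩(G)`; by Philip Hall's theorem
`μ(X, G) = Σ_k (-1)^k · #{chains X = X_0 < ⋯ < X_k = G}`, and chopping off the final `G`
identifies the sum over `T_⟨g⟩(G)` with `-χ(T_⟨g⟩(G)) = -1`, which cancels `μ(G, G) = 1`.
-/

open Finset

namespace LTSeries

variable {α : Type*} [PartialOrder α]

lemma length_eq_zero_of_head_eq_last {s : LTSeries α} (h : s.head = s.last) :
    s.length = 0 := by
  by_contra hs
  have h0 : (0 : Fin (s.length + 1)) < Fin.last _ := by
    simpa [Fin.lt_def] using Nat.pos_of_ne_zero hs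
  exact (s.strictMono h0).ne h

lemma head_eq_last_of_length_eq_zero {s : LTSeries α} (h : s.length = 0) : s.head = s.last :=
  congrArg s (Fin.ext (by simp [h]))

lemma eq_singleton_of_head_eq_last {s : LTSeries α} (h : s.head = s.last) :
    s = RelSeries.singleton _ s.head := by
  have hs := length_eq_zero_of_head_eq_last h
  ext i
  · exact hs
  · obtain rfl : i = 0 := Fin.ext (by have := i.isLt; omega)
    rfl

def codRestrict (s : LTSeries α) (S : Set α) (h : ∀ i, s i ∈ S) : LTSeries S :=
  LTSeries.mk s.length (fun i => ⟨s i, h i⟩) fun _ _ hij => s.strictMono hij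

@[simp]
lemma length_codRestrict (s : LTSeries α) (S : Set α) (h : ∀ i, s i ∈ S) :
    (s.codRestrict S h).length = s.length :=
  rfl

variable [Fintype α] [DecidableEq α] [DecidableLT α]

lemma sum_head_last_eq_sum_Ioc [LocallyFiniteOrder α] {M : Type*} [AddCommMonoid M]
    (f : ℕ → M) {x y : α} (hxy : x ≠ y) :
    ∑ s : LTSeries α with s.head = x ∧ s.last = y, f s.length =
      ∑ z ∈ Ioc x y, ∑ t : LTSeries α with t.head = z ∧ t.last = y, f (t.length + 1) := by
  rw [Finset.sum_sigma']
  have hlen {s : LTSeries α} (hs : s.head = x ∧ s.last = y) : s.length ≠ 0 := fun h0 =>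
    hxy (hs.1 ▸ hs.2 ▸ head_eq_last_of_length_eq_zero h0)
  have hcons {p : Σ _ : α, LTSeries α} (hp : p ∈ (Ioc x y).sigma fun z =>
      univ.filter fun t : LTSeries α => t.head = z ∧ t.last = y) : x < p.2.head := by
    simp only [mem_sigma, mem_Ioc, mem_filter, mem_univ, true_and] at hp
    exact hp.2.1 ▸ hp.1.1
  refine Finset.sum_bij' (fun s hs => ⟨s 1, s.tail (hlen (mem_filter.mp hs).2)⟩)
    (fun p hp => p.2.cons x (hcons hp)) ?_ ?_ ?_ ?_ ?_
  · rintro s hs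
    have hs' := hlen (mem_filter.mp hs).2
    simp only [mem_filter, mem_univ, true_and] at hs
    simp only [mem_sigma, mem_Ioc, mem_filter, mem_univ, RelSeries.head_tail,
      RelSeries.last_tail, hs.2, and_true, ← hs.1]
    have h01 : (0 : Fin (s.length + 1)) < 1 := by
      rw [Fin.lt_def, Fin.val_one', Nat.mod_eq_of_lt (by omega)]
      exact Nat.one_pos
    exact ⟨s.strictMono h01, hs.2 ▸ s.monotone (Fin.le_last 1)⟩
  · rintro p hp
    simp only [mem_filter, mem_univ, true_and, RelSeries.head_cons, RelSeries.last_cons]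
    simp only [mem_sigma, mem_filter, mem_univ, true_and] at hp
    exact hp.2.2
  · rintro s hs
    have hs' := hlen (mem_filter.mp hs).2
    obtain ⟨rfl, -⟩ := (mem_filter.mp hs).2
    exact RelSeries.cons_self_tail hs'
  · rintro ⟨z, t⟩ hp
    have htail := RelSeries.tail_cons t x (hcons hp)
    simp only [mem_sigma, mem_filter, mem_univ, true_and] at hp
    refine Sigma.ext ?_ (heq_of_eq htail)
    exact (RelSeries.head_tail _ _).symm.trans ((congrArg RelSeries.head htail).trans hp.2.1)
  · rintro s hs
    simp [Nat.sub_add_cancel (Nat.pos_of_ne_zero (hlen (mem_filter.mp hs).2))]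

variable {S : Set α} [DecidablePred (· ∈ S)] {y : α}

-- Appending `y` embeds the chains of `S` into the chains of `α` running from `S` to `y`;
-- `hup` makes every such chain arise, since all its entries but the last lie in `S`.
lemma sum_head_mem_last_eq_sum_succ {M : Type*} [AddCommMonoid M] (f : ℕ → M)
    (hS : ∀ x ∈ S, x < y) (hup : ∀ x ∈ S, ∀ z, x ≤ z → z < y → z ∈ S) :
    ∑ s : LTSeries α with s.head ∈ S ∧ s.last = y, f s.length =
      ∑ t : LTSeries S, f (t.length + 1) := by
  symm
  have hlen {s : LTSeries α} (hs : s.head ∈ S ∧ s.last = y) : s.length ≠ 0 := fun h0 =>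
    (hS _ hs.1).ne (hs.2 ▸ head_eq_last_of_length_eq_zero h0)
  have hmem {s : LTSeries α} (hs : s.head ∈ S ∧ s.last = y) (k) : s.eraseLast k ∈ S := by
    have hk : k.val < s.length := by
      have := k.isLt; have := hlen hs; simp only [RelSeries.eraseLast_length] at *; omega
    exact hup _ hs.1 _ (s.monotone (Fin.zero_le _)) (hs.2 ▸ s.strictMono (Fin.mk_lt_of_lt_val hk))
  refine Finset.sum_bij'
    (fun t _ => (t.map Subtype.val (Subtype.strictMono_coe _)).snoc y (hS _ t.last.2))
    (fun s hs => codRestrict s.eraseLast S (hmem (mem_filter.mp hs).2)) ?_ ?_ ?_ ?_ ?_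
  · intro t _
    simp
  · intros
    exact mem_univ _
  · intro t _
    ext k
    · simp
    · exact RelSeries.snoc_castSucc (t.map Subtype.val (Subtype.strictMono_coe _)) y _
        (Fin.cast (by simp) k)
  · intro s hs
    have hs' := hlen (mem_filter.mp hs).2
    obtain ⟨-, rfl⟩ := (mem_filter.mp hs).2
    exact RelSeries.snoc_self_eraseLast s hs'
  · intro t _
    simp

lemma finsum_neg_one_pow_mul_card_eq_sum {β : Type*} [Preorder β] [Fintype β]
    [DecidableLT β] :
    ∑ᶠ i : ℕ, (-1 : ℤ) ^ i * Nat.card {s : LTSeries β // s.length = i} =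
      ∑ s : LTSeries β, (-1 : ℤ) ^ s.length := by
  rw [finsum_eq_sum_of_support_subset _ (s := Finset.range (Fintype.card β)) ?_,
    ← sum_fiberwise_of_maps_to (g := RelSeries.length) (t := Finset.range (Fintype.card β))
      (fun s _ => mem_range.mpr (LTSeries.length_lt_card s))]
  · refine sum_congr rfl fun i _ => ?_
    rw [Nat.card_eq_fintype_card, Fintype.card_subtype,
      sum_congr rfl fun s hs => by rw [(mem_filter.mp hs).2], sum_const, nsmul_eq_mul, mul_comm]
  · intro i
    contrapose!
    rw [coe_range, Set.mem_Iio, not_lt]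
    intro hi
    have : IsEmpty {s : LTSeries β // s.length = i} :=
      ⟨fun s => (LTSeries.length_lt_card s.1).not_ge (s.2.symm ▸ hi)⟩
    simp

end LTSeries

namespace IncidenceAlgebra

open LTSeries

variable {α : Type*} [PartialOrder α] [Fintype α] [DecidableEq α] [DecidableLT α]
  [LocallyFiniteOrder α]

theorem mu_eq_sum_ltSeries (𝕜 : Type*) [Ring 𝕜] (x y : α) :
    mu 𝕜 x y = ∑ s : LTSeries α with s.head = x ∧ s.last = y, (-1 : 𝕜) ^ s.length := by
  induction x using WellFoundedGT.induction with
  | _ x ih =>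
  obtain rfl | hxy := eq_or_ne x y
  · rw [mu_self, Finset.sum_eq_single_of_mem (RelSeries.singleton _ x) (by simp)]
    · simp
    · rintro s hs hne
      simp only [mem_filter, mem_univ, true_and] at hs
      exact absurd (hs.1 ▸ eq_singleton_of_head_eq_last (hs.1.trans hs.2.symm)) hne
  · rw [mu_eq_neg_sum_Ioc_of_ne hxy, sum_head_last_eq_sum_Ioc _ hxy, ← sum_neg_distrib]
    refine sum_congr rfl fun z hz => ?_
    rw [ih z (mem_Ioc.mp hz).1, ← sum_neg_distrib]
    simp [pow_succ]

variable {S : Set α} [DecidablePred (· ∈ S)] {y : α}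

theorem sum_mu_eq_neg_sum_ltSeries (𝕜 : Type*) [Ring 𝕜] (hS : ∀ x ∈ S, x < y)
    (hup : ∀ x ∈ S, ∀ z, x ≤ z → z < y → z ∈ S) :
    ∑ x : α with x ∈ S, mu 𝕜 x y = -∑ t : LTSeries S, (-1 : 𝕜) ^ t.length := by
  simp_rw [mu_eq_sum_ltSeries]
  calc ∑ x : α with x ∈ S, ∑ s : LTSeries α with s.head = x ∧ s.last = y, (-1 : 𝕜) ^ s.length
      = ∑ s : LTSeries α with s.head ∈ S ∧ s.last = y, (-1 : 𝕜) ^ s.length := by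
        rw [← sum_fiberwise_of_maps_to (g := RelSeries.head) (t := univ.filter (· ∈ S))
          (by simp +contextual)]
        refine sum_congr rfl fun x hx => ?_
        congr 1
        ext s
        simp only [mem_filter, mem_univ, true_and] at hx ⊢
        constructor
        · rintro ⟨rfl, h⟩
          exact ⟨⟨hx, h⟩, rfl⟩
        · rintro ⟨⟨-, h⟩, rfl⟩
          exact ⟨rfl, h⟩
    _ = ∑ t : LTSeries S, (-1 : 𝕜) ^ (t.length + 1) :=
      sum_head_mem_last_eq_sum_succ _ hS hup
    _ = -∑ t : LTSeries S, (-1 : 𝕜) ^ t.length := by simp [pow_succ]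

end IncidenceAlgebra

namespace Subgroup

variable {G : Type*} [Group G]

lemma sup_eq_top_iff_not_le_of_index_prime {N : Subgroup G} (hp : N.index.Prime)
    (X : Subgroup G) : X ⊔ N = ⊤ ↔ ¬X ≤ N := by
  constructor
  · intro h hX
    rw [sup_eq_right.mpr hX] at h
    exact Nat.not_prime_one (by simpa [h] using hp)
  · intro hX
    rw [← relIndex_mul_index (le_sup_right : N ≤ X ⊔ N)] at hp
    rcases Nat.prime_mul_iff.mp hp with ⟨-, h1⟩ | ⟨-, h1⟩
    · exact index_eq_one.mp h1
    · exact absurd (le_sup_left.trans (relIndex_eq_one.mp h1)) hX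

open Classical in
lemma sum_card_mul_eq_sum_sum_mem [Fintype G] {M : Type*} [NonAssocSemiring M]
    (A : Finset (Subgroup G)) (f : Subgroup G → M) :
    ∑ X ∈ A, (Nat.card X : M) * f X = ∑ g : G, ∑ X ∈ A with g ∈ X, f X := by
  simp_rw [sum_filter]
  rw [sum_comm]
  refine sum_congr rfl fun X _ => ?_
  rw [← sum_filter, sum_const, nsmul_eq_mul, Nat.card_eq_fintype_card, Fintype.card_subtype]

end Subgroup

section Bouc

variable {G : Type*} [Group G] [Finite G] {N : Subgroup G}

-- the order structure through which `subgroupMu` is defined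
open Classical in
noncomputable local instance : LocallyFiniteOrder (Subgroup G) := Fintype.toLocallyFiniteOrder

open Classical in
lemma sum_subgroupMu_TCposet (C : Subgroup G) :
    ∑ X : Subgroup G with X ∈ TCposet G N C, subgroupMu G X ⊤ = -eulerCharTC G N C := by
  have hS : ∀ X ∈ TCposet G N C, X < ⊤ := fun X hX => hX.2.1
  have hup : ∀ X ∈ TCposet G N C, ∀ Z, X ≤ Z → Z < ⊤ → Z ∈ TCposet G N C :=
    fun X hX Z hXZ hZ => ⟨hX.1.trans hXZ, hZ, fun hZN => hX.2.2 (hXZ.trans hZN)⟩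
  rw [eulerCharTC]
  simp only [chainCount]
  rw [LTSeries.finsum_neg_one_pow_mul_card_eq_sum,
    ← IncidenceAlgebra.sum_mu_eq_neg_sum_ltSeries ℤ hS hup]
  rfl

open Classical in
lemma sum_subgroupMu_not_le_mem (hN : N ≠ ⊤) (g : G) :
    ∑ X : Subgroup G with ¬X ≤ N ∧ g ∈ X, subgroupMu G X ⊤ =
      1 - eulerCharTC G N (Subgroup.zpowers g) := by
  have hset : univ.filter (fun X : Subgroup G => ¬X ≤ N ∧ g ∈ X) =
      insert ⊤ (univ.filter (· ∈ TCposet G N (Subgroup.zpowers g))) := by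
    ext X
    simp only [mem_filter, mem_univ, true_and, mem_insert, TCposet, Set.mem_ofPred_eq,
      Subgroup.zpowers_le, lt_top_iff_ne_top]
    by_cases hX : X = ⊤
    · simp [hX, top_le_iff, hN]
    · simp [hX, and_comm]
  rw [hset, sum_insert (by simp [TCposet]), sum_subgroupMu_TCposet, sub_eq_add_neg]
  simp [subgroupMu]

open Classical in
lemma sum_subgroupMu_not_le_mem_of_notMem (hG : ¬IsCyclic G) {g : G} (hg : g ∉ N) :
    ∑ X : Subgroup G with ¬X ≤ N ∧ g ∈ X, subgroupMu G X ⊤ = 0 := by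
  have hset : univ.filter (fun X : Subgroup G => ¬X ≤ N ∧ g ∈ X) =
      Icc (Subgroup.zpowers g) ⊤ := by
    ext X
    simp only [mem_filter, mem_univ, true_and, mem_Icc, le_top, and_true, Subgroup.zpowers_le]
    exact ⟨And.right, fun hgX => ⟨fun hXN => hg (hXN hgX), hgX⟩⟩
  have hne : Subgroup.zpowers g ≠ ⊤ := fun h =>
    hG (isCyclic_iff_exists_zpowers_eq_top.mpr ⟨g, h⟩)
  rw [hset]
  exact (IncidenceAlgebra.sum_Icc_mu_left _ _).trans (if_neg hne)

end Bouc

theorem stmt11_general (G : Type*) [Group G] [Finite G] (hG : ¬ IsCyclic G)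
    (N : Subgroup G) (p : ℕ) (hp : p.Prime) (hidx : N.index = p)
    (hchi : ∀ C : Subgroup G, C ≤ N → IsCyclic ↥C → eulerCharTC G N C = 1) :
    mBouc G N = 0 := by
  classical
  have := Fintype.ofFinite G
  subst hidx
  have hN : N ≠ ⊤ := fun h => Nat.not_prime_one (by simpa [h] using hp)
  have hsum : ∑ X : Subgroup G with ¬X ≤ N, (Nat.card X : ℤ) * subgroupMu G X ⊤ = 0 := by
    rw [Subgroup.sum_card_mul_eq_sum_sum_mem]
    refine sum_eq_zero fun g _ => ?_
    rw [filter_filter]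
    by_cases hg : g ∈ N
    · rw [sum_subgroupMu_not_le_mem hN g,
        hchi _ (Subgroup.zpowers_le.mpr hg) inferInstance, sub_self]
    · exact sum_subgroupMu_not_le_mem_of_notMem hG hg
  rw [mBouc, mul_eq_zero]
  right
  simp_rw [Subgroup.sup_eq_top_iff_not_le_of_index_prime hp, ← sum_filter]
  exact_mod_cast hsum

/-- If `G` is not cyclic, `N ⊴ G` has prime index `p`, and `χ(T_C(G)) = 1` for every
cyclic subgroup `C` of `N`, then `m_{G,N} = 0`. -/
theorem stmt11 (G : Type*) [Group G] [Finite G] (hG : ¬ IsCyclic G)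
    (N : Subgroup G) (hN : N.Normal) (p : ℕ) (hp : p.Prime) (hidx : N.index = p)
    (hchi : ∀ C : Subgroup G, C ≤ N → IsCyclic ↥C → eulerCharTC G N C = 1) :
    mBouc G N = 0 :=
  stmt11_general G hG N p hp hidx hchi
end

section
/- Let S_5 be the symmetric group on 5 letters and A_5 its alternating subgroup. For every cyclic subgroup C of A_5, the comparability graph of the poset T_C(S_5) is connected. -/
/-- The comparability graph of a preorder: distinct `X`, `Y` are adjacent iff they are
comparable. -/
def compGraph (α : Type*) [Preorder α] : SimpleGraph α where
  Adj X Y := X ≠ Y ∧ (X ≤ Y ∨ Y ≤ X)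
  symm := ⟨fun _ _ h => ⟨h.1.symm, h.2.symm⟩⟩
  loopless := ⟨fun _ h => h.1 rfl⟩

open Equiv Equiv.Perm MulAction Subgroup
open scoped Pointwise

section compGraph

variable {α β : Type*} [Preorder α] [Preorder β]

theorem compGraph_reachable_of_le {S : Set α} {a b : S} (h : (a : α) ≤ b) :
    (compGraph S).Reachable a b := by
  rcases eq_or_ne a b with rfl | hne
  · rfl
  · exact SimpleGraph.Adj.reachable ⟨hne, Or.inl h⟩

theorem compGraph_reachable_of_le_of_le {S : Set α} {a b c : S} (ha : (c : α) ≤ a)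
    (hb : (c : α) ≤ b) : (compGraph S).Reachable a b :=
  (compGraph_reachable_of_le ha).symm.trans (compGraph_reachable_of_le hb)

def OrderIso.compGraphIso (e : α ≃o β) : compGraph α ≃g compGraph β where
  toEquiv := e.toEquiv
  map_rel_iff' := and_congr e.injective.ne_iff (or_congr e.le_iff_le e.le_iff_le)

end compGraph

section TCposet

variable {G H : Type*} [Group G] [Group H] {N C X Y : Subgroup G}

theorem mem_TCposet {t : G} (hC : C ≤ X) (hX : X ≠ ⊤) (ht : t ∈ X) (htN : t ∉ N) :
    X ∈ TCposet G N C :=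
  ⟨hC, lt_top_iff_ne_top.2 hX, fun hXN => htN (hXN ht)⟩

theorem mem_TCposet_of_le (hX : X ∈ TCposet G N C) (hXY : X ≤ Y) (hY : Y ≠ ⊤) :
    Y ∈ TCposet G N C :=
  ⟨hX.1.trans hXY, lt_top_iff_ne_top.2 hY, fun hYN => hX.2.2 (hXY.trans hYN)⟩

theorem orderIso_mem_TCposet_iff (e : Subgroup G ≃o Subgroup H) :
    e X ∈ TCposet H (e N) (e C) ↔ X ∈ TCposet G N C := by
  change e C ≤ e X ∧ e X < ⊤ ∧ ¬e X ≤ e N ↔ C ≤ X ∧ X < ⊤ ∧ ¬X ≤ N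
  rw [← e.map_top, e.le_iff_le, e.lt_iff_lt, e.le_iff_le]

def OrderIso.mapTCposet (e : Subgroup G ≃o Subgroup H) (N C : Subgroup G) :
    TCposet G N C ≃o TCposet H (e N) (e C) where
  toEquiv := e.toEquiv.subtypeEquiv fun _ => (orderIso_mem_TCposet_iff e).symm
  map_rel_iff' := e.le_iff_le

theorem connected_compGraph_TCposet_conj [N.Normal] (g c : G) :
    (compGraph (TCposet G N (zpowers (g * c * g⁻¹)))).Connected ↔
      (compGraph (TCposet G N (zpowers c))).Connected := by
  have h := ((MulAut.conj g).mapSubgroup.mapTCposet N (zpowers c)).compGraphIso.connected_iff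
  rw [MulEquiv.mapSubgroup_apply, Normal.map_conj_eq N, MulEquiv.mapSubgroup_apply,
    MonoidHom.map_zpowers] at h
  exact h.symm

end TCposet

section Perm

variable {α : Type*} {C X : Subgroup (Perm α)}

theorem exists_le_stabilizer_of_not_isPretransitive (hX : ¬IsPretransitive X α) :
    ∃ s : Set α, s.Nonempty ∧ sᶜ.Nonempty ∧ X ≤ stabilizer (Perm α) s := by
  obtain ⟨x, hx⟩ : ∃ x : α, orbit X x ≠ Set.univ := by
    by_contra! h
    exact hX ⟨fun x y => mem_orbit_iff.1 ((h x).symm ▸ Set.mem_univ y)⟩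
  exact ⟨orbit X x, nonempty_orbit x, Set.nonempty_compl.2 hx,
    fun g hg => mem_stabilizer_iff.2 (smul_orbit (⟨g, hg⟩ : X) x)⟩

variable [DecidableEq α]

theorem swap_mem_stabilizer_of_mem_iff {a b : α} {s : Set α} (h : a ∈ s ↔ b ∈ s) :
    swap a b ∈ stabilizer (Perm α) s := by
  by_cases ha : a ∈ s
  · exact swap_mem_stabilizer ha (h.1 ha)
  · rw [← stabilizer_compl]
    exact swap_mem_stabilizer ha (mt h.2 ha)

variable [Fintype α]

theorem exists_sign_eq_neg_one_of_mem_TCposet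
    (hX : X ∈ TCposet (Perm α) (alternatingGroup α) C) : ∃ t ∈ X, sign t = -1 := by
  obtain ⟨t, htX, htA⟩ := SetLike.not_le_iff_exists.1 hX.2.2
  exact ⟨t, htX, (Int.units_eq_one_or _).resolve_left (mt mem_alternatingGroup.2 htA)⟩

theorem mem_TCposet_alternatingGroup {t : Perm α} (hC : C ≤ X) (hX : X ≠ ⊤) (ht : t ∈ X)
    (hsign : sign t = -1) : X ∈ TCposet (Perm α) (alternatingGroup α) C :=
  mem_TCposet hC hX ht (by rw [mem_alternatingGroup, hsign]; decide)

theorem exists_swap_mem_stabilizer_inf (h4 : 4 < Fintype.card α) (s t : Set α) :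
    ∃ a b, a ≠ b ∧ swap a b ∈ stabilizer (Perm α) s ⊓ stabilizer (Perm α) t := by
  classical
  obtain ⟨a, b, hab, h⟩ := Fintype.exists_ne_map_eq_of_card_lt
    (fun x => (decide (x ∈ s), decide (x ∈ t))) (by simpa using h4)
  simp only [Prod.mk.injEq, decide_eq_decide] at h
  exact ⟨a, b, hab, swap_mem_stabilizer_of_mem_iff h.1, swap_mem_stabilizer_of_mem_iff h.2⟩

theorem stabilizer_inf_stabilizer_mem_TCposet (h4 : 4 < Fintype.card α) {s t : Set α}
    (hs : s.Nonempty) (hsc : sᶜ.Nonempty) (hCs : C ≤ stabilizer (Perm α) s)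
    (hCt : C ≤ stabilizer (Perm α) t) :
    stabilizer (Perm α) s ⊓ stabilizer (Perm α) t ∈ TCposet (Perm α) (alternatingGroup α) C := by
  obtain ⟨a, b, hab, hmem⟩ := exists_swap_mem_stabilizer_inf h4 s t
  exact mem_TCposet_alternatingGroup (le_inf hCs hCt)
    (ne_top_of_le_ne_top (stabilizer_ne_top_of_nonempty_of_nonempty_compl hs hsc) inf_le_left)
    hmem (sign_swap hab)

theorem exists_isCycle_mem_of_isPretransitive (hα : (Fintype.card α).Prime)
    [IsPretransitive X α] : ∃ g ∈ X, g.IsCycle ∧ g.support = Finset.univ := by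
  have : Fact (Fintype.card α).Prime := ⟨hα⟩
  obtain ⟨x⟩ : Nonempty α := Fintype.card_pos_iff.1 hα.pos
  have hdvd : Fintype.card α ∣ Nat.card X := by
    rw [← Nat.card_eq_fintype_card, ← Set.ncard_univ, ← orbit_eq_univ X x, ← index_stabilizer]
    exact index_dvd_card _
  obtain ⟨g, hg⟩ := exists_prime_orderOf_dvd_card' _ hdvd
  rw [← Subgroup.orderOf_coe] at hg
  have hcycle : (g : Perm α).IsCycle :=
    isCycle_of_prime_order' (hg ▸ hα) (by rw [hg]; linarith [hα.pos])
  refine ⟨g, g.2, hcycle, Finset.eq_univ_of_card _ ?_⟩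
  rw [← hcycle.orderOf, hg]

theorem exists_sign_eq_neg_one_mem_stabilizer_of_isPretransitive
    (hα : (Fintype.card α).Prime) (hα2 : Fintype.card α ≠ 2) [IsPretransitive X α]
    {t : Perm α} (ht : t ∈ X) (hsign : sign t = -1) (p : α) :
    ∃ u ∈ X, u p = p ∧ sign u = -1 := by
  obtain ⟨g, hgX, hg, hsupp⟩ := exists_isCycle_mem_of_isPretransitive (X := X) hα
  have hgsign : sign g = 1 := by
    rw [hg.sign, hsupp, Finset.card_univ, (hα.eq_two_or_odd'.resolve_left hα2).neg_one_pow,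
      neg_neg]
  have hmoved : ∀ x, g x ≠ x := fun x => mem_support.1 (hsupp ▸ Finset.mem_univ x)
  obtain ⟨i, hi⟩ := hg.exists_zpow_eq (hmoved p) (hmoved (t p))
  refine ⟨(g ^ i)⁻¹ * t, X.mul_mem (X.inv_mem (X.zpow_mem hgX i)) ht, ?_, ?_⟩
  · rw [Perm.mul_apply, ← hi, ← Perm.mul_apply, inv_mul_cancel, Perm.one_apply]
  · rw [Perm.sign_mul, map_inv, map_zpow, hgsign, one_zpow, inv_one, one_mul, hsign]

end Perm

section FixedPoint

variable {α : Type*} [Fintype α] [DecidableEq α] {C : Subgroup (Perm α)}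

theorem connected_compGraph_TCposet_of_le_stabilizer (hα : (Fintype.card α).Prime)
    (h4 : 4 < Fintype.card α) {p : α} (hC : C ≤ stabilizer (Perm α) p) :
    (compGraph (TCposet (Perm α) (alternatingGroup α) C)).Connected := by
  rw [← stabilizer_singleton] at hC
  have : Nontrivial α := Fintype.one_lt_card_iff_nontrivial.1 (by omega)
  have hpc : ({p}ᶜ : Set α).Nonempty := by
    obtain ⟨q, hq⟩ := exists_ne p
    exact ⟨q, hq⟩
  have hub : stabilizer (Perm α) ({p} : Set α) ∈ TCposet (Perm α) (alternatingGroup α) C := by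
    simpa using stabilizer_inf_stabilizer_mem_TCposet h4 (Set.singleton_nonempty p) hpc hC hC
  have reach_hub (s : Set α) (hs : s.Nonempty) (hsc : sᶜ.Nonempty)
      (hsT : stabilizer (Perm α) s ∈ TCposet (Perm α) (alternatingGroup α) C) :
      (compGraph (TCposet (Perm α) (alternatingGroup α) C)).Reachable ⟨_, hsT⟩ ⟨_, hub⟩ :=
    compGraph_reachable_of_le_of_le
      (c := ⟨_, stabilizer_inf_stabilizer_mem_TCposet h4 hs hsc hsT.1 hC⟩) inf_le_left inf_le_right
  refine (SimpleGraph.connected_iff_exists_forall_reachable _).2 ⟨⟨_, hub⟩, fun ⟨X, hX⟩ => ?_⟩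
  refine SimpleGraph.Reachable.symm ?_
  by_cases htrans : IsPretransitive X α
  · obtain ⟨t, htX, ht⟩ := exists_sign_eq_neg_one_of_mem_TCposet hX
    obtain ⟨u, huX, hup, hu⟩ :=
      exists_sign_eq_neg_one_mem_stabilizer_of_isPretransitive hα (by omega) htX ht p
    have hmeet :
        X ⊓ stabilizer (Perm α) ({p} : Set α) ∈ TCposet (Perm α) (alternatingGroup α) C :=
      mem_TCposet_alternatingGroup (le_inf hX.1 hC)
        (ne_top_of_le_ne_top hub.2.1.ne inf_le_right)
        (mem_inf.2 ⟨huX, by rwa [stabilizer_singleton, mem_stabilizer_iff]⟩) hu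
    exact compGraph_reachable_of_le_of_le (c := ⟨_, hmeet⟩) inf_le_left inf_le_right
  · obtain ⟨s, hs, hsc, hXs⟩ := exists_le_stabilizer_of_not_isPretransitive htrans
    have hsT := mem_TCposet_of_le hX hXs (stabilizer_ne_top_of_nonempty_of_nonempty_compl hs hsc)
    exact (compGraph_reachable_of_le (b := ⟨_, hsT⟩) hXs).trans (reach_hub s hs hsc hsT)

end FixedPoint

theorem Subgroup.mem_normalizer_zpowers_iff {G : Type*} [Group G] [Finite G] {g x : G} :
    g ∈ normalizer (zpowers x) ↔ g * x * g⁻¹ ∈ zpowers x := by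
  refine ⟨fun h => (mem_normalizer_iff.1 h x).1 (mem_zpowers x), fun h => ?_⟩
  refine mem_normalizer_fintype fun n hn => ?_
  obtain ⟨k, rfl⟩ := mem_zpowers_iff.1 hn
  rw [← conj_zpow]
  exact zpow_mem h k

theorem Equiv.Perm.isCycle_of_sign_eq_one_of_forall_ne {α : Type*} [Fintype α] [DecidableEq α]
    (h5 : Fintype.card α = 5) {c : Perm α} (hc : sign c = 1) (hfix : ∀ x, c x ≠ x) :
    c.IsCycle ∧ c.support = Finset.univ := by
  have hsupp : c.support = Finset.univ :=
    Finset.eq_univ_iff_forall.2 fun x => mem_support.2 (hfix x)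
  have hsum : c.cycleType.sum = 5 := by rw [sum_cycleType, hsupp, Finset.card_univ, h5]
  -- all cycles have length at least two, so there are at most two of them
  have hcard : c.cycleType.card ≤ 2 := by
    have := Multiset.card_nsmul_le_sum fun n hn => two_le_of_mem_cycleType (σ := c) hn
    rw [hsum, smul_eq_mul] at this
    omega
  rw [sign_of_cycleType, hsum] at hc
  refine ⟨card_cycleType_eq_one.1 ?_, hsupp⟩
  interval_cases c.cycleType.card
  all_goals first | rfl | exact absurd hc (by decide)

theorem isConj_finRotate_five {c : Perm (Fin 5)} (hc : sign c = 1) (hfix : ∀ x, c x ≠ x) :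
    IsConj (finRotate 5) c := by
  obtain ⟨hcycle, hsupp⟩ := isCycle_of_sign_eq_one_of_forall_ne (Fintype.card_fin 5) hc hfix
  exact isCycle_finRotate.isConj hcycle (by rw [support_finRotate, hsupp])

theorem mem_zpowers_finRotate_five_iff {y : Perm (Fin 5)} :
    y ∈ zpowers (finRotate 5) ↔ ∃ k : Fin 5, finRotate 5 ^ (k : ℕ) = y := by
  have hord : orderOf (finRotate 5) = 5 := by
    rw [isCycle_finRotate.orderOf, support_finRotate, Finset.card_univ, Fintype.card_fin]
  rw [mem_zpowers_iff_mem_range_orderOf, hord, Finset.mem_image, Fin.exists_iff]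
  simp only [Finset.mem_range, exists_prop]

set_option maxRecDepth 10000 in
theorem exists_isSwap_of_not_mem_normalizer_zpowers_finRotate {y : Perm (Fin 5)}
    (hy : sign y = -1) (hyF : y ∉ normalizer (zpowers (finRotate 5))) :
    ∃ i j : ℕ, (finRotate 5 ^ i * y * finRotate 5 ^ j).IsSwap := by
  have key : ∀ y : Perm (Fin 5), sign y = -1 →
      (∀ k : Fin 5, finRotate 5 ^ (k : ℕ) ≠ y * finRotate 5 * y⁻¹) →
      ∃ i j : Fin 5, (finRotate 5 ^ (i : ℕ) * y * finRotate 5 ^ (j : ℕ)).support.card = 2 := by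
    decide
  rw [mem_normalizer_zpowers_iff, mem_zpowers_finRotate_five_iff, not_exists] at hyF
  obtain ⟨i, j, h⟩ := key y hy hyF
  exact ⟨i, j, card_support_eq_two.1 h⟩

theorem le_normalizer_of_mem_TCposet_zpowers_finRotate {X : Subgroup (Perm (Fin 5))}
    (hX : X ∈ TCposet (Perm (Fin 5)) (alternatingGroup (Fin 5)) (zpowers (finRotate 5))) :
    X ≤ normalizer (zpowers (finRotate 5)) := by
  have hr : finRotate 5 ∈ X := hX.1 (mem_zpowers _)
  have hodd : ∀ y ∈ X, sign y = -1 → y ∈ normalizer (zpowers (finRotate 5)) := by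
    intro y hyX hy
    by_contra hyF
    obtain ⟨i, j, hswap⟩ := exists_isSwap_of_not_mem_normalizer_zpowers_finRotate hy hyF
    refine hX.2.1.ne (eq_top_iff.2 ?_)
    rw [← closure_prime_cycle_swap (by norm_num) isCycle_finRotate support_finRotate hswap,
      closure_le]
    rintro _ (rfl | rfl)
    · exact hr
    · exact X.mul_mem (X.mul_mem (X.pow_mem hr i) hyX) (X.pow_mem hr j)
  obtain ⟨t, htX, ht⟩ := exists_sign_eq_neg_one_of_mem_TCposet hX
  intro x hxX
  rcases Int.units_eq_one_or (sign x) with hx | hx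
  · have hxt := hodd (x * t) (X.mul_mem hxX htX) (by rw [Perm.sign_mul, hx, ht, one_mul])
    simpa using mul_mem hxt (inv_mem (hodd t htX ht))
  · exact hodd x hxX hx

theorem normalizer_zpowers_finRotate_mem_TCposet :
    normalizer (zpowers (finRotate 5)) ∈
      TCposet (Perm (Fin 5)) (alternatingGroup (Fin 5)) (zpowers (finRotate 5)) := by
  obtain ⟨σ, hσ, hσr⟩ : ∃ σ : Perm (Fin 5), sign σ = -1 ∧
      σ * finRotate 5 * σ⁻¹ = finRotate 5 ^ 2 := by
    decide
  refine mem_TCposet_alternatingGroup le_normalizer ?_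
    (mem_normalizer_zpowers_iff.2 (hσr ▸ pow_mem (mem_zpowers _) 2)) hσ
  intro htop
  have h01 := mem_normalizer_zpowers_iff.1 (htop ▸ mem_top (swap (0 : Fin 5) 1))
  revert h01
  rw [mem_zpowers_finRotate_five_iff]
  decide

theorem connected_compGraph_TCposet_zpowers_finRotate :
    (compGraph (TCposet (Perm (Fin 5)) (alternatingGroup (Fin 5))
      (zpowers (finRotate 5)))).Connected :=
  (SimpleGraph.connected_iff_exists_forall_reachable _).2
    ⟨⟨_, normalizer_zpowers_finRotate_mem_TCposet⟩, fun X =>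
      (compGraph_reachable_of_le (le_normalizer_of_mem_TCposet_zpowers_finRotate X.2)).symm⟩

/-- For every cyclic subgroup `C` of `A₅`, the comparability graph of the poset
`T_C(S₅)` is connected. -/
theorem stmt13 (C : Subgroup (Equiv.Perm (Fin 5)))
    (hCN : C ≤ alternatingGroup (Fin 5)) (hC : IsCyclic ↥C) :
    (compGraph ↥(TCposet (Equiv.Perm (Fin 5)) (alternatingGroup (Fin 5)) C)).Connected := by
  obtain ⟨c, rfl⟩ := C.isCyclic_iff_exists_zpowers_eq_top.1 hC
  have hc : sign c = 1 := mem_alternatingGroup.1 (hCN (mem_zpowers c))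
  by_cases hfix : ∃ p, c p = p
  · obtain ⟨p, hp⟩ := hfix
    exact connected_compGraph_TCposet_of_le_stabilizer (by norm_num) (by simp)
      (zpowers_le.2 (mem_stabilizer_iff.2 hp))
  · simp only [not_exists] at hfix
    obtain ⟨g, rfl⟩ := isConj_iff.1 (isConj_finRotate_five hc hfix)
    exact (connected_compGraph_TCposet_conj g _).2
      connected_compGraph_TCposet_zpowers_finRotate
end

section
/- Let G = S_5 be the symmetric group on 5 letters and N = A_5 the alternating group on 5 letters, a normal subgroup of G. Then m_{G,N} = 0; that is, Σ_{X ≤ S_5, X·A_5 = S_5} |X|·μ(X, S_5) = 0. -/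
open Finset

section SubgroupMobius

variable {G : Type*} [Group G]

open Classical in
theorem sum_subgroupMu_top_of_le [Finite G] (Y : Subgroup G) :
    (∑ X : Subgroup G, if Y ≤ X then subgroupMu G X ⊤ else 0) = if Y = ⊤ then 1 else 0 := by
  let : LocallyFiniteOrder (Subgroup G) := Fintype.toLocallyFiniteOrder
  rw [← sum_filter, ← IncidenceAlgebra.sum_Icc_mu_left (𝕜 := ℤ) Y ⊤]
  refine sum_congr (by ext X; simp) fun X _ => rfl

open Classical in
theorem sum_card_filter_mem_mul_subgroupMu_top [Fintype G] (p : G → Prop) [DecidablePred p] :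
    ∑ X : Subgroup G, (#{g | g ∈ X ∧ p g} : ℤ) * subgroupMu G X ⊤ =
      #{g | p g ∧ Subgroup.zpowers g = ⊤} := by
  calc ∑ X : Subgroup G, (#{g | g ∈ X ∧ p g} : ℤ) * subgroupMu G X ⊤
      = ∑ X : Subgroup G, ∑ g : G, if g ∈ X ∧ p g then subgroupMu G X ⊤ else 0 := by
        simp only [card_filter, Nat.cast_sum, Nat.cast_ite, Nat.cast_one, Nat.cast_zero,
          sum_mul, ite_mul, one_mul, zero_mul]
    _ = ∑ g : G, if p g then ∑ X : Subgroup G,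
          (if Subgroup.zpowers g ≤ X then subgroupMu G X ⊤ else 0) else 0 := by
        rw [sum_comm]
        refine sum_congr rfl fun g _ => ?_
        split_ifs with hp <;> simp [hp, Subgroup.zpowers_le]
    _ = #{g | p g ∧ Subgroup.zpowers g = ⊤} := by
        simp only [sum_subgroupMu_top_of_le, card_filter, ite_and, Nat.cast_sum, Nat.cast_ite,
          Nat.cast_one, Nat.cast_zero]

end SubgroupMobius

section IndexTwo

variable {G : Type*} [Group G] {N : Subgroup G}

theorem sup_eq_top_iff_not_le_of_index_eq_two (hN : N.index = 2) (X : Subgroup G) :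
    X ⊔ N = ⊤ ↔ ¬ X ≤ N := by
  constructor
  · intro hX hle
    rw [sup_eq_right.mpr hle, ← Subgroup.index_eq_one, hN] at hX
    exact absurd hX (by decide)
  · intro hX
    obtain ⟨t, htX, htN⟩ := SetLike.not_le_iff_exists.mp hX
    refine (Subgroup.eq_top_iff' _).mpr fun g => ?_
    by_cases hg : g ∈ N
    · exact Subgroup.mem_sup_right hg
    · have : t⁻¹ * g ∈ N := by
        rw [Subgroup.mul_mem_iff_of_index_two hN, inv_mem_iff]
        tauto
      simpa using mul_mem (Subgroup.mem_sup_left htX) (Subgroup.mem_sup_right this)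

open Classical in
/-- Left multiplication by an element of `X \ N` swaps `X ∩ N` and `X \ N`. -/
theorem card_eq_two_mul_card_filter_notMem_of_index_eq_two [Fintype G] (hN : N.index = 2)
    {X : Subgroup G} (hX : ¬ X ≤ N) : Nat.card X = 2 * #{g | g ∈ X ∧ g ∉ N} := by
  obtain ⟨t, htX, htN⟩ := SetLike.not_le_iff_exists.mp hX
  have hswap : #{g | g ∈ X ∧ g ∈ N} = #{g | g ∈ X ∧ g ∉ N} := by
    refine card_bij' (fun g _ => t * g) (fun g _ => t⁻¹ * g) ?_ ?_ (by simp) (by simp)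
    · simp only [mem_filter, mem_univ, true_and]
      rintro g ⟨hgX, hgN⟩
      refine ⟨mul_mem htX hgX, ?_⟩
      rw [Subgroup.mul_mem_iff_of_index_two hN]
      tauto
    · simp only [mem_filter, mem_univ, true_and]
      rintro g ⟨hgX, hgN⟩
      refine ⟨mul_mem (inv_mem htX) hgX, ?_⟩
      rw [Subgroup.mul_mem_iff_of_index_two hN, inv_mem_iff]
      tauto
  rw [Nat.card_eq_fintype_card, Fintype.card_subtype,
    ← card_filter_add_card_filter_not (fun g => g ∈ N), filter_filter, filter_filter,
    hswap, two_mul]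

open Classical in
theorem sum_sup_eq_top_card_mul_subgroupMu_of_index_eq_two [Fintype G] (hN : N.index = 2) :
    (∑ X : Subgroup G, if X ⊔ N = ⊤ then (Nat.card X : ℤ) * subgroupMu G X ⊤ else 0) =
      2 * #{g | g ∉ N ∧ Subgroup.zpowers g = ⊤} := by
  rw [← sum_card_filter_mem_mul_subgroupMu_top (· ∉ N), mul_sum]
  refine sum_congr rfl fun X _ => ?_
  by_cases hX : X ≤ N
  · have : #{g | g ∈ X ∧ g ∉ N} = 0 :=
      card_eq_zero.mpr (filter_eq_empty_iff.mpr fun g _ hg => hg.2 (hX hg.1))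
    rw [if_neg (mt (sup_eq_top_iff_not_le_of_index_eq_two hN X).mp (not_not.mpr hX)), this]
    simp
  · rw [if_pos ((sup_eq_top_iff_not_le_of_index_eq_two hN X).mpr hX),
      card_eq_two_mul_card_filter_notMem_of_index_eq_two hN hX]
    push_cast
    ring

end IndexTwo

open Classical in
/-- For `G = S₅` and `N = A₅` one has `m_{G,N} = 0`; that is,
`Σ_{X ≤ S₅, X·A₅ = S₅} |X|·μ(X, S₅) = 0`. -/
theorem stmt14 :
    mBouc (Equiv.Perm (Fin 5)) (alternatingGroup (Fin 5)) = 0 ∧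
    (∑ X : Subgroup (Equiv.Perm (Fin 5)), if X ⊔ alternatingGroup (Fin 5) = ⊤ then
        (Nat.card X : ℤ) * subgroupMu (Equiv.Perm (Fin 5)) X ⊤
      else 0) = 0 := by
  have hnotCyclic : ∀ g : Equiv.Perm (Fin 5), Subgroup.zpowers g ≠ ⊤ := fun g hg =>
    absurd (Equiv.Perm.isCyclic_iff_card_le_two.mp
      (isCyclic_iff_exists_zpowers_eq_top.mpr ⟨g, hg⟩)) (by simp)
  have hsum := sum_sup_eq_top_card_mul_subgroupMu_of_index_eq_two
    (alternatingGroup.index_eq_two (α := Fin 5))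
  simp only [hnotCyclic, and_false, filter_false, card_empty, CharP.cast_eq_zero,
    mul_zero] at hsum
  refine ⟨?_, hsum⟩
  have hsumℚ := congrArg (Int.cast : ℤ → ℚ) hsum
  push_cast at hsumℚ
  rw [mBouc, hsumℚ, mul_zero]
end

section
/- The symmetric group S_5 on 5 letters is a B-group; that is, for every nontrivial normal subgroup N of S_5, m_{S_5, N} = 0. -/
open Classical in
/-- Delta lemma: the Möbius values over the upper interval `[Z, ⊤]` sum to `δ(Z, ⊤)`. -/
lemma mu_delta (G : Type*) [Group G] [Finite G] (Z : Subgroup G) :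
    ∑ X : Subgroup G, (if Z ≤ X then subgroupMu G X ⊤ else 0)
      = if Z = ⊤ then 1 else 0 := by
  letI : LocallyFiniteOrder (Subgroup G) := Fintype.toLocallyFiniteOrder
  have h := IncidenceAlgebra.sum_Icc_mu_left (𝕜 := ℤ) (α := Subgroup G) Z ⊤
  have hIcc : Finset.Icc Z (⊤ : Subgroup G) = Finset.univ.filter (fun X => Z ≤ X) := by
    ext X; simp [Finset.mem_Icc, le_top]
  rw [hIcc, Finset.sum_filter] at h
  rw [← h]
  rfl

open Classical in
/-- Dual Weisner-type vanishing: for a fixed `a ≠ ⊤` and each `W ≤ a`, the Möbius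
values `μ(X, ⊤)` summed over those `X` with `X ⊓ a = W` vanish. -/
lemma weisner_zero (G : Type*) [Group G] [Finite G] (a : Subgroup G) (ha : a ≠ ⊤) :
    ∀ W : Subgroup G, W ≤ a →
      (∑ X : Subgroup G, if X ⊓ a = W then subgroupMu G X ⊤ else 0) = 0 := by
  intro W
  refine (wellFounded_gt (α := Subgroup G)).induction
    (C := fun W => W ≤ a →
      (∑ X : Subgroup G, if X ⊓ a = W then subgroupMu G X ⊤ else 0) = 0) W ?_
  intro W IH hWa
  have hdc : (∑ W' : Subgroup G, if W ≤ W' ∧ W' ≤ a then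
        (∑ X : Subgroup G, if X ⊓ a = W' then subgroupMu G X ⊤ else 0) else 0)
      = ∑ X : Subgroup G, (if W ≤ X then subgroupMu G X ⊤ else 0) := by
    have step : ∀ W' : Subgroup G, (if W ≤ W' ∧ W' ≤ a then
        (∑ X : Subgroup G, if X ⊓ a = W' then subgroupMu G X ⊤ else 0) else 0)
        = ∑ X : Subgroup G, (if W ≤ W' ∧ W' ≤ a then
            (if X ⊓ a = W' then subgroupMu G X ⊤ else 0) else 0) := by
      intro W'; split_ifs <;> simp
    rw [Finset.sum_congr rfl (fun W' _ => step W'), Finset.sum_comm]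
    refine Finset.sum_congr rfl (fun X _ => ?_)
    rw [Finset.sum_eq_single (X ⊓ a)]
    · by_cases hWX : W ≤ X
      · have : W ≤ X ⊓ a ∧ X ⊓ a ≤ a := ⟨le_inf hWX hWa, inf_le_right⟩
        simp [this, hWX]
      · have : ¬ (W ≤ X ⊓ a ∧ X ⊓ a ≤ a) := fun h => hWX (h.1.trans inf_le_left)
        simp [this, hWX]
    · intro b _ hb
      simp [Ne.symm hb]
    · simp
  have hWtop : W ≠ ⊤ := fun h => ha (top_le_iff.mp (h ▸ hWa))
  have hdelta := mu_delta G W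
  rw [if_neg hWtop] at hdelta
  rw [hdelta] at hdc
  rw [Finset.sum_eq_single W] at hdc
  · simpa [hWa] using hdc
  · intro b _ hb
    by_cases hc : W ≤ b ∧ b ≤ a
    · rw [if_pos hc]
      exact IH b (lt_of_le_of_ne hc.1 (Ne.symm hb)) hc.2
    · rw [if_neg hc]
  · simp

open Classical in
/-- If no element generates the whole group, then `Σ_X |X| μ(X, ⊤) = 0`. -/
lemma total_zero (G : Type*) [Group G] [Finite G]
    (hnc : ∀ g : G, Subgroup.zpowers g ≠ ⊤) :
    ∑ X : Subgroup G, (Nat.card X : ℤ) * subgroupMu G X ⊤ = 0 := by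
  letI : Fintype G := Fintype.ofFinite G
  have hcard : ∀ X : Subgroup G,
      (Nat.card X : ℤ) = ∑ g : G, (if g ∈ X then (1 : ℤ) else 0) := by
    intro X
    simp [Nat.card_eq_fintype_card, Fintype.card_subtype, Finset.sum_boole]
  calc ∑ X : Subgroup G, (Nat.card X : ℤ) * subgroupMu G X ⊤
      = ∑ X : Subgroup G, ∑ g : G, (if g ∈ X then subgroupMu G X ⊤ else 0) := by
        refine Finset.sum_congr rfl fun X _ => ?_
        rw [hcard X, Finset.sum_mul]
        exact Finset.sum_congr rfl fun g _ => by split_ifs <;> simp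
    _ = ∑ g : G, ∑ X : Subgroup G,
          (if Subgroup.zpowers g ≤ X then subgroupMu G X ⊤ else 0) := by
        rw [Finset.sum_comm]
        exact Finset.sum_congr rfl fun g _ => Finset.sum_congr rfl fun X _ => by
          simp [Subgroup.zpowers_le]
    _ = ∑ g : G, (if Subgroup.zpowers g = ⊤ then (1 : ℤ) else 0) :=
        Finset.sum_congr rfl fun g _ => mu_delta G _
    _ = 0 := Finset.sum_eq_zero fun g _ => if_neg (hnc g)

/-! ### Facts specific to `S₅` -/

abbrev G5 := Equiv.Perm (Fin 5)
abbrev A5 : Subgroup G5 := alternatingGroup (Fin 5)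

lemma A5_ne_top : A5 ≠ ⊤ := by
  intro h
  have : Equiv.swap (0 : Fin 5) 1 ∈ A5 := h ▸ Subgroup.mem_top _
  rw [Equiv.Perm.mem_alternatingGroup,
    Equiv.Perm.sign_swap (show (0 : Fin 5) ≠ 1 by decide)] at this
  exact absurd this (by decide)

lemma not_cyclic5 : ∀ g : G5, Subgroup.zpowers g ≠ ⊤ := by
  intro g h
  have h1 : Equiv.swap (0 : Fin 5) 1 ∈ Subgroup.zpowers g := h ▸ Subgroup.mem_top _
  have h2 : Equiv.swap (0 : Fin 5) 2 ∈ Subgroup.zpowers g := h ▸ Subgroup.mem_top _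
  obtain ⟨m, hm⟩ := h1
  obtain ⟨n, hn⟩ := h2
  have hcomm : Equiv.swap (0 : Fin 5) 1 * Equiv.swap (0 : Fin 5) 2
      = Equiv.swap (0 : Fin 5) 2 * Equiv.swap (0 : Fin 5) 1 := by
    rw [← hm, ← hn, ← zpow_add, ← zpow_add, add_comm]
  exact absurd hcomm (by decide)

lemma index_A5 : A5.index = 2 := by
  have h := Subgroup.index_mul_card A5
  have h2 : 2 * Nat.card A5 = Nat.card G5 := by
    rw [Nat.card_eq_fintype_card, Nat.card_eq_fintype_card]
    exact two_mul_card_alternatingGroup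
  have hpos : 0 < Nat.card A5 := Nat.card_pos
  exact Nat.eq_of_mul_eq_mul_right hpos (h.trans h2.symm)

lemma A5_maximal {B : Subgroup G5} (hAB : A5 ≤ B) : B = A5 ∨ B = ⊤ := by
  have h := Subgroup.relIndex_mul_index hAB
  rw [index_A5] at h
  have hB0 : B.index ≠ 0 := Subgroup.FiniteIndex.index_ne_zero
  have hdvd : B.index ∣ 2 := Dvd.intro_left _ h
  have hle : B.index ≤ 2 := Nat.le_of_dvd (by norm_num) hdvd
  have hcases : B.index = 1 ∨ B.index = 2 := by omega
  rcases hcases with h1 | h1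
  · exact Or.inr (Subgroup.index_eq_one.mp h1)
  · left
    rw [h1] at h
    have hrel : A5.relIndex B = 1 := by omega
    exact le_antisymm (Subgroup.relIndex_eq_one.mp hrel) hAB

lemma sup_A5_eq_top_iff (X : Subgroup G5) : X ⊔ A5 = ⊤ ↔ ¬ X ≤ A5 := by
  constructor
  · intro h hle
    rw [sup_eq_right.mpr hle] at h
    exact A5_ne_top h
  · intro h
    rcases A5_maximal (le_sup_right : A5 ≤ X ⊔ A5) with h1 | h1
    · exact absurd (le_sup_left.trans h1.le) h
    · exact h1

lemma card_double {Y : Subgroup G5} (h : ¬ Y ≤ A5) :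
    Nat.card Y = 2 * Nat.card (Y ⊓ A5 : Subgroup G5) := by
  have h1 : (A5.subgroupOf Y).index * Nat.card (A5.subgroupOf Y) = Nat.card Y :=
    Subgroup.index_mul_card _
  have hrel : A5.relIndex Y = 2 := by
    have hdvd : A5.relIndex Y ∣ 2 := index_A5 ▸ Subgroup.relIndex_dvd_index_of_normal A5 Y
    have hne1 : A5.relIndex Y ≠ 1 := fun hh => h (Subgroup.relIndex_eq_one.mp hh)
    have hne0 : A5.relIndex Y ≠ 0 := Subgroup.FiniteIndex.index_ne_zero
    have := Nat.le_of_dvd (by norm_num) hdvd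
    omega
  have hsg : A5.subgroupOf Y = (Y ⊓ A5).subgroupOf Y := by
    rw [inf_comm]
    exact (Subgroup.inf_subgroupOf_right A5 Y).symm
  have hc : Nat.card (A5.subgroupOf Y) = Nat.card (Y ⊓ A5 : Subgroup G5) := by
    rw [hsg]
    exact Nat.card_congr (Subgroup.subgroupOfEquivOfLe inf_le_left).toEquiv
  rw [← h1, hc]
  rw [show (A5.subgroupOf Y).index = A5.relIndex Y from rfl, hrel]

lemma center_triv (τ : G5) (hc : ∀ g : G5, g * τ * g⁻¹ = τ) : τ = 1 := by
  suffices h : ∀ a : Fin 5, τ a = a by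
    exact Equiv.ext fun a => (h a).trans (Equiv.Perm.one_apply a).symm
  intro a
  by_contra hne'
  obtain ⟨c, hca, hcb⟩ :=
    (show ∀ a b : Fin 5, ∃ c, c ≠ a ∧ c ≠ b by decide) a (τ a)
  have hcomm : τ * Equiv.swap a c * τ⁻¹ = Equiv.swap a c := by
    have := hc (Equiv.swap a c)
    have h2 : Equiv.swap a c * τ = τ * Equiv.swap a c := by
      calc Equiv.swap a c * τ
          = (Equiv.swap a c * τ * (Equiv.swap a c)⁻¹) * Equiv.swap a c := by group
        _ = τ * Equiv.swap a c := by rw [this]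
    calc τ * Equiv.swap a c * τ⁻¹ = Equiv.swap a c * τ * τ⁻¹ := by rw [← h2]
      _ = Equiv.swap a c := by group
  have hswap : Equiv.swap (τ a) (τ c) = Equiv.swap a c := by
    rw [Equiv.swap_apply_apply]
    exact hcomm
  have := DFunLike.congr_fun hswap a
  rw [Equiv.swap_apply_left] at this
  by_cases hta : τ c = a
  · rw [show Equiv.swap (τ a) (τ c) a = τ a by
      rw [hta]; exact Equiv.swap_apply_right _ _] at this
    exact hcb (this ▸ rfl)
  · rw [Equiv.swap_apply_of_ne_of_ne (Ne.symm hne') (Ne.symm hta)] at this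
    exact hca this.symm

lemma normal_class (N : Subgroup G5) (hN : N.Normal) (hne : N ≠ ⊥) :
    N = A5 ∨ N = ⊤ := by
  have hsub : (N.subgroupOf A5).Normal := hN.subgroupOf A5
  rcases IsSimpleGroup.eq_bot_or_eq_top_of_normal (N.subgroupOf A5) hsub with hb | ht
  · exfalso
    apply hne
    have hdis : Disjoint N A5 := Subgroup.subgroupOf_eq_bot.mp hb
    rw [Subgroup.eq_bot_iff_forall]
    intro τ hτ
    apply center_triv
    intro g
    have hmem : g * τ * g⁻¹ * τ⁻¹ ∈ N := N.mul_mem (hN.conj_mem τ hτ g) (N.inv_mem hτ)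
    have hmemA : g * τ * g⁻¹ * τ⁻¹ ∈ A5 := by
      rw [Equiv.Perm.mem_alternatingGroup]
      rw [map_mul, map_mul, map_mul, map_inv, map_inv]
      rw [mul_comm (Equiv.Perm.sign g) (Equiv.Perm.sign τ)]
      group
    have h1 : g * τ * g⁻¹ * τ⁻¹ = 1 := Subgroup.disjoint_def.mp hdis hmem hmemA
    calc g * τ * g⁻¹ = (g * τ * g⁻¹ * τ⁻¹) * τ := by group
      _ = τ := by rw [h1]; group
  · exact A5_maximal (Subgroup.subgroupOf_eq_top.mp ht)

open Classical in
lemma key_inf :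
    ∑ X : Subgroup G5, (Nat.card (X ⊓ A5 : Subgroup G5) : ℤ) * subgroupMu G5 X ⊤ = 0 := by
  have hW : ∀ W : Subgroup G5,
      (∑ X : Subgroup G5, if X ⊓ A5 = W then subgroupMu G5 X ⊤ else 0) = 0 := by
    intro W
    by_cases hWA : W ≤ A5
    · exact weisner_zero G5 A5 A5_ne_top W hWA
    · exact Finset.sum_eq_zero fun X _ =>
        if_neg (fun h => hWA ((le_of_eq h.symm).trans inf_le_right))
  calc ∑ X : Subgroup G5, (Nat.card (X ⊓ A5 : Subgroup G5) : ℤ) * subgroupMu G5 X ⊤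
      = ∑ X : Subgroup G5, ∑ W : Subgroup G5,
          (if X ⊓ A5 = W then (Nat.card W : ℤ) * subgroupMu G5 X ⊤ else 0) := by
        refine Finset.sum_congr rfl fun X _ => ?_
        rw [Finset.sum_eq_single (X ⊓ A5)]
        · simp
        · intro b _ hb
          exact if_neg fun h => hb h.symm
        · simp
    _ = ∑ W : Subgroup G5, ∑ X : Subgroup G5,
          (if X ⊓ A5 = W then (Nat.card W : ℤ) * subgroupMu G5 X ⊤ else 0) := Finset.sum_comm
    _ = ∑ W : Subgroup G5, (Nat.card W : ℤ) *
          (∑ X : Subgroup G5, if X ⊓ A5 = W then subgroupMu G5 X ⊤ else 0) := by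
        refine Finset.sum_congr rfl fun W _ => ?_
        rw [Finset.mul_sum]
        exact Finset.sum_congr rfl fun X _ => by split_ifs <;> simp
    _ = 0 := Finset.sum_eq_zero fun W _ => by rw [hW W, mul_zero]

open Classical in
lemma Sout_zero :
    ∑ X : Subgroup G5, (if X ≤ A5 then 0 else (Nat.card X : ℤ) * subgroupMu G5 X ⊤) = 0 := by
  have htot := total_zero G5 not_cyclic5
  have hkey := key_inf
  have h1 : (∑ X : Subgroup G5, (if X ≤ A5 then (Nat.card X : ℤ) * subgroupMu G5 X ⊤ else 0))
      + (∑ X : Subgroup G5, (if X ≤ A5 then 0 else (Nat.card X : ℤ) * subgroupMu G5 X ⊤)) = 0 := by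
    calc (∑ X : Subgroup G5, (if X ≤ A5 then (Nat.card X : ℤ) * subgroupMu G5 X ⊤ else 0))
        + (∑ X : Subgroup G5, (if X ≤ A5 then 0 else (Nat.card X : ℤ) * subgroupMu G5 X ⊤))
        = ∑ X : Subgroup G5, ((if X ≤ A5 then (Nat.card X : ℤ) * subgroupMu G5 X ⊤ else 0)
            + (if X ≤ A5 then 0 else (Nat.card X : ℤ) * subgroupMu G5 X ⊤)) :=
          Finset.sum_add_distrib.symm
      _ = ∑ X : Subgroup G5, (Nat.card X : ℤ) * subgroupMu G5 X ⊤ :=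
          Finset.sum_congr rfl fun X _ => by split_ifs <;> ring
      _ = 0 := htot
  have h2 : 2 * (∑ X : Subgroup G5, (if X ≤ A5 then (Nat.card X : ℤ) * subgroupMu G5 X ⊤ else 0))
      + (∑ X : Subgroup G5, (if X ≤ A5 then 0 else (Nat.card X : ℤ) * subgroupMu G5 X ⊤)) = 0 := by
    calc 2 * (∑ X : Subgroup G5, (if X ≤ A5 then (Nat.card X : ℤ) * subgroupMu G5 X ⊤ else 0))
        + (∑ X : Subgroup G5, (if X ≤ A5 then 0 else (Nat.card X : ℤ) * subgroupMu G5 X ⊤))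
        = ∑ X : Subgroup G5, (2 * (if X ≤ A5 then (Nat.card X : ℤ) * subgroupMu G5 X ⊤ else 0)
            + (if X ≤ A5 then 0 else (Nat.card X : ℤ) * subgroupMu G5 X ⊤)) := by
          rw [Finset.mul_sum, Finset.sum_add_distrib]
      _ = ∑ X : Subgroup G5, 2 * ((Nat.card (X ⊓ A5 : Subgroup G5) : ℤ) * subgroupMu G5 X ⊤) := by
          refine Finset.sum_congr rfl fun X _ => ?_
          by_cases hX : X ≤ A5
          · rw [if_pos hX, if_pos hX, inf_eq_left.mpr hX]
            ring
          · rw [if_neg hX, if_neg hX, card_double hX]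
            push_cast
            ring
      _ = 2 * ∑ X : Subgroup G5, (Nat.card (X ⊓ A5 : Subgroup G5) : ℤ) * subgroupMu G5 X ⊤ :=
          (Finset.mul_sum _ _ _).symm
      _ = 0 := by rw [hkey, mul_zero]
  omega

/-- `S₅` is a `B`-group: `m_{S₅, N} = 0` for every nontrivial normal subgroup `N`. -/
theorem stmt15 (N : Subgroup (Equiv.Perm (Fin 5))) (hN : N.Normal) (hne : N ≠ ⊥) :
    mBouc (Equiv.Perm (Fin 5)) N = 0 := by
  classical
  unfold mBouc
  rcases normal_class N hN hne with h | h
  · subst h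
    have hcast : ∀ X : Subgroup G5,
        (if X ⊔ A5 = ⊤ then (Nat.card X : ℚ) * ((subgroupMu G5 X ⊤ : ℤ) : ℚ) else 0)
          = (((if X ≤ A5 then 0 else (Nat.card X : ℤ) * subgroupMu G5 X ⊤ : ℤ)) : ℚ) := by
      intro X
      by_cases hX : X ≤ A5
      · rw [if_neg (fun hc => (sup_A5_eq_top_iff X).mp hc hX), if_pos hX]
        simp
      · rw [if_pos ((sup_A5_eq_top_iff X).mpr hX), if_neg hX]
        push_cast
        ring
    rw [Finset.sum_congr rfl fun X _ => hcast X, ← Int.cast_sum, Sout_zero, Int.cast_zero,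
      mul_zero]
  · subst h
    have hcast : ∀ X : Subgroup G5,
        (if X ⊔ ⊤ = ⊤ then (Nat.card X : ℚ) * ((subgroupMu G5 X ⊤ : ℤ) : ℚ) else 0)
          = (((Nat.card X : ℤ) * subgroupMu G5 X ⊤ : ℤ) : ℚ) := by
      intro X
      rw [if_pos (sup_top_eq X)]
      push_cast
      ring
    rw [Finset.sum_congr rfl fun X _ => hcast X, ← Int.cast_sum, total_zero G5 not_cyclic5,
      Int.cast_zero, mul_zero]
end
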